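/- arXiv:1508.06336 — 3 statements merged into one kernel-verified Lean document; each statement's English description precedes it below -/
import Mathlib

section
/- Let x ∈ ℝ^N with N = 2^n and WHT coefficients X[k]. Fix b < n, a binary matrix M ∈ 𝔽₂^{n×b}, and an offset d ∈ 𝔽₂ⁿ. Define the subsampled signal's B-point WHT (B = 2^b) by U[j] = √(N/B) · (1/√N) · Σ_{ℓ∈𝔽₂^b} x[Mℓ + d] (-1)^{⟨j,ℓ⟩} (up to normalization as in the paper). Then U[j] = Σ_{k : Mᵀk = j} X[k] (-1)^{⟨d,k⟩} for every j ∈ 𝔽₂^b. That is, subsampling along the coset {Mℓ+d : ℓ ∈ 𝔽₂^b} followed by a B-point WHT aliases all WHT coefficients X[k] with Mᵀk = j into bin j, each modulated by the sign (-1)^{⟨d,k⟩}. -/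
open Finset

/-- Inner product over 𝔽₂, as a natural number exponent. -/
noncomputable def ip {n : ℕ} (k m : Fin n → ZMod 2) : ℕ :=
  (∑ i, k i * m i).val

/-!
Substituting the inverse transform, `x (M ℓ + d) = N^{-1/2} ∑ₖ (-1)^⟨d,k⟩ (-1)^⟨Mᵀk,ℓ⟩ X k`.
After exchanging the sums, the sum over `ℓ ∈ 𝔽₂^b` is a character sum of `ℓ ↦ (-1)^⟨Mᵀk + j, ℓ⟩`,
which equals `B` when `Mᵀk = j` and vanishes otherwise; the normalisation constants then cancel.
-/

open Matrix

lemma ip_eq_val_dotProduct {n : ℕ} (k m : Fin n → ZMod 2) : ip k m = (k ⬝ᵥ m).val :=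
  rfl

lemma ip_comm {n : ℕ} (k m : Fin n → ZMod 2) : ip k m = ip m k := by
  rw [ip_eq_val_dotProduct, dotProduct_comm, ip_eq_val_dotProduct]

lemma ip_mulVec_right {n b : ℕ} (M : Matrix (Fin n) (Fin b) (ZMod 2))
    (k : Fin n → ZMod 2) (ℓ : Fin b → ZMod 2) :
    ip k (M *ᵥ ℓ) = ip (Mᵀ *ᵥ k) ℓ := by
  rw [ip_eq_val_dotProduct, ip_eq_val_dotProduct, dotProduct_mulVec, ← vecMul_transpose,
    transpose_transpose]

lemma neg_one_pow_val_add (a c : ZMod 2) :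
    (-1 : ℝ) ^ (a + c).val = (-1 : ℝ) ^ a.val * (-1 : ℝ) ^ c.val := by
  rw [ZMod.val_add, ← neg_one_pow_eq_pow_mod_two, pow_add]

noncomputable def walshChar {n : ℕ} (v : Fin n → ZMod 2) : AddChar (Fin n → ZMod 2) ℝ where
  toFun ℓ := (-1 : ℝ) ^ ip v ℓ
  map_zero_eq_one' := by simp [ip]
  map_add_eq_mul' ℓ ℓ' := by
    simp only [ip_eq_val_dotProduct, dotProduct_add, neg_one_pow_val_add]

lemma walshChar_apply {n : ℕ} (v ℓ : Fin n → ZMod 2) : walshChar v ℓ = (-1 : ℝ) ^ ip v ℓ :=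
  rfl

lemma walshChar_add {n : ℕ} (v w ℓ : Fin n → ZMod 2) :
    walshChar (v + w) ℓ = walshChar v ℓ * walshChar w ℓ := by
  simpa only [walshChar_apply, ip_comm ℓ] using AddChar.map_add_eq_mul (walshChar ℓ) v w

lemma walshChar_eq_zero_iff {n : ℕ} (v : Fin n → ZMod 2) : walshChar v = 0 ↔ v = 0 := by
  refine ⟨fun h => ?_, fun h => by ext ℓ; simp [h, walshChar_apply, ip]⟩
  by_contra hv
  obtain ⟨i, hi⟩ := Function.ne_iff.mp hv
  have hvi : v i = 1 := (by decide : ∀ a : ZMod 2, a ≠ 0 → a = 1) _ hi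
  -- The basis vector `eᵢ` detects the nonzero coordinate: `(-1)^⟨v,eᵢ⟩ = -1`.
  have := DFunLike.congr_fun h (Pi.single i 1)
  rw [walshChar_apply, AddChar.zero_apply, ip_eq_val_dotProduct, dotProduct_single, hvi,
    mul_one] at this
  norm_num [ZMod.val_one] at this

lemma sum_walshChar {n : ℕ} (v : Fin n → ZMod 2) :
    ∑ ℓ, walshChar v ℓ = if v = 0 then (2 : ℝ) ^ n else 0 := by
  simp only [AddChar.sum_eq_ite, walshChar_eq_zero_iff, Fintype.card_pi, ZMod.card, prod_const,
    card_univ, Fintype.card_fin, Nat.cast_pow, Nat.cast_ofNat]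

lemma neg_one_pow_ip_mulVec_add {n b : ℕ} (M : Matrix (Fin n) (Fin b) (ZMod 2))
    (ℓ : Fin b → ZMod 2) (d k : Fin n → ZMod 2) :
    (-1 : ℝ) ^ ip (M *ᵥ ℓ + d) k = walshChar (Mᵀ *ᵥ k) ℓ * (-1 : ℝ) ^ ip d k := by
  rw [ip_comm, ← walshChar_apply, AddChar.map_add_eq_mul, walshChar_apply, walshChar_apply,
    walshChar_apply, ip_mulVec_right, ip_comm k]

lemma sum_coset_walsh_transform {n b : ℕ} (X : (Fin n → ZMod 2) → ℝ)
    (M : Matrix (Fin n) (Fin b) (ZMod 2)) (d : Fin n → ZMod 2) (j : Fin b → ZMod 2) :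
    ∑ ℓ, (∑ k, (-1 : ℝ) ^ ip (M *ᵥ ℓ + d) k * X k) * (-1 : ℝ) ^ ip j ℓ
      = 2 ^ b * ∑ k ∈ univ.filter (fun k => Mᵀ *ᵥ k = j), X k * (-1 : ℝ) ^ ip d k := by
  have hterm : ∀ ℓ k, (-1 : ℝ) ^ ip (M *ᵥ ℓ + d) k * X k * (-1 : ℝ) ^ ip j ℓ
      = X k * (-1 : ℝ) ^ ip d k * walshChar (Mᵀ *ᵥ k + j) ℓ := by
    intro ℓ k
    rw [neg_one_pow_ip_mulVec_add, walshChar_add, walshChar_apply j]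
    ring
  have hneg : -j = j := funext fun i => ZMod.neg_eq_self_mod_two (j i)
  simp_rw [sum_mul, hterm]
  rw [sum_comm, mul_sum, sum_filter]
  refine sum_congr rfl fun k _ => ?_
  simp only [← mul_sum, sum_walshChar, add_eq_zero_iff_eq_neg, hneg]
  split_ifs <;> ring

theorem subsampling_aliasing_general {n b : ℕ}
    (x X : (Fin n → ZMod 2) → ℝ)
    (hx : ∀ m, x m = (1 / Real.sqrt (2 ^ n)) *
      ∑ k : Fin n → ZMod 2, (-1 : ℝ) ^ ip m k * X k)
    (M : Matrix (Fin n) (Fin b) (ZMod 2)) (d : Fin n → ZMod 2)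
    (U : (Fin b → ZMod 2) → ℝ)
    (hU : ∀ j, U j = Real.sqrt ((2 ^ n : ℝ) / (2 ^ b : ℝ)) * (1 / Real.sqrt (2 ^ n)) *
      (Real.sqrt ((2 ^ n : ℝ) / (2 ^ b : ℝ)) * ∑ ℓ : Fin b → ZMod 2, x (M.mulVec ℓ + d) * (-1 : ℝ) ^ ip j ℓ)) :
    ∀ j, U j = ∑ k ∈ Finset.univ.filter (fun k : Fin n → ZMod 2 => M.transpose.mulVec k = j),
      X k * (-1 : ℝ) ^ ip d k := by
  intro j
  simp_rw [hx, mul_assoc, ← mul_sum] at hU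
  rw [hU, sum_coset_walsh_transform]
  have hs0 : Real.sqrt (2 ^ n) ≠ 0 := by positivity
  field_simp
  rw [Real.sq_sqrt (by positivity), Real.sq_sqrt (by positivity)]
  field_simp

/-- subsampling along a coset followed by a small WHT aliases the
WHT coefficients `X k` with `Mᵀ k = j` into bin `j`, modulated by `(-1)^⟨d,k⟩`. -/
theorem subsampling_aliasing {n b : ℕ} (hb : b < n)
    (x X : (Fin n → ZMod 2) → ℝ)
    (hx : ∀ m, x m = (1 / Real.sqrt (2 ^ n)) *
      ∑ k : Fin n → ZMod 2, (-1 : ℝ) ^ ip m k * X k)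
    (M : Matrix (Fin n) (Fin b) (ZMod 2)) (d : Fin n → ZMod 2)
    (U : (Fin b → ZMod 2) → ℝ)
    (hU : ∀ j, U j = Real.sqrt ((2 ^ n : ℝ) / (2 ^ b : ℝ)) * (1 / Real.sqrt (2 ^ n)) *
      (Real.sqrt ((2 ^ n : ℝ) / (2 ^ b : ℝ)) * ∑ ℓ : Fin b → ZMod 2, x (M.mulVec ℓ + d) * (-1 : ℝ) ^ ip j ℓ)) :
    ∀ j, U j = ∑ k ∈ Finset.univ.filter (fun k : Fin n → ZMod 2 => M.transpose.mulVec k = j),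
      X k * (-1 : ℝ) ^ ip d k :=
  subsampling_aliasing_general x X hx M d U hU
end

section
/- The density evolution recursion p_i = (1 − e^{−p_{i−1}/η})^{C−1} with p₀ = 1 has the property: for C = 3 and η ≥ 0.4073, the map f(p) = (1 − e^{−p/η})² satisfies f(p) < p for all p ∈ (0,1], and hence the sequence p_i is strictly decreasing and converges to 0; moreover for any ε > 0 there exists a finite i with p_i ≤ ε. -/
open Filter

namespace DensityEvolutionAux

/-- Tangent-line inequality for powers: `x^m·x ≥ y^m·y + (m+1) y^m (x - y)`
for nonnegative `x, y` (convexity of `x ↦ x^(m+1)` on `[0, ∞)`). -/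
lemma pow_tangent : ∀ (m : ℕ) {x y : ℝ}, 0 ≤ x → 0 ≤ y →
    y ^ m * y + ((m : ℝ) + 1) * y ^ m * (x - y) ≤ x ^ m * x := by
  intro m
  induction m with
  | zero =>
    intro x y hx hy
    simp
  | succ m ih =>
    intro x y hx hy
    have ih' := ih hx hy
    have h1 : x * (y ^ m * y + ((m : ℝ) + 1) * y ^ m * (x - y)) ≤ x * (x ^ m * x) :=
      mul_le_mul_of_nonneg_left ih' hx
    have h2 : 0 ≤ ((m : ℝ) + 1) * (y ^ m * (x - y) ^ 2) := by positivity
    rw [pow_succ, pow_succ]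
    push_cast
    nlinarith [h1, h2]

/-- Truncated power series `∑_{k<40} t^k/(k+1)` of `-log(1-t)/t`. -/
noncomputable def Pp (t : ℝ) : ℝ := ∑ k ∈ Finset.range 40, t ^ k / ((k : ℝ) + 1)

/-- Its derivative `∑_{k<39} (k+1) t^k/(k+2)`. -/
noncomputable def Dp (t : ℝ) : ℝ :=
  ∑ k ∈ Finset.range 39, ((k : ℝ) + 1) * t ^ k / ((k : ℝ) + 2)

lemma Pp_eq (s : ℝ) :
    Pp s = (∑ k ∈ Finset.range 39, s ^ (k + 1) / ((k : ℝ) + 2)) + 1 := by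
  rw [Pp, Finset.sum_range_succ']
  congr 1
  · refine Finset.sum_congr rfl fun k _ => ?_
    push_cast
    ring
  · norm_num

lemma Pp_tangent {t t₀ : ℝ} (ht : 0 ≤ t) (ht₀ : 0 ≤ t₀) :
    Pp t₀ + Dp t₀ * (t - t₀) ≤ Pp t := by
  rw [Pp_eq, Pp_eq, Dp]
  have hterm : ∀ k ∈ Finset.range 39,
      t₀ ^ (k + 1) / ((k : ℝ) + 2) + ((k : ℝ) + 1) * t₀ ^ k / ((k : ℝ) + 2) * (t - t₀)
        ≤ t ^ (k + 1) / ((k : ℝ) + 2) := by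
    intro k _
    have hpt : t₀ ^ (k + 1) + ((k : ℝ) + 1) * t₀ ^ k * (t - t₀) ≤ t ^ (k + 1) := by
      rw [pow_succ, pow_succ]
      exact pow_tangent k ht ht₀
    have hk2 : (0 : ℝ) < (k : ℝ) + 2 := by positivity
    calc t₀ ^ (k + 1) / ((k : ℝ) + 2) + ((k : ℝ) + 1) * t₀ ^ k / ((k : ℝ) + 2) * (t - t₀)
        = (t₀ ^ (k + 1) + ((k : ℝ) + 1) * t₀ ^ k * (t - t₀)) / ((k : ℝ) + 2) := by ring
      _ ≤ t ^ (k + 1) / ((k : ℝ) + 2) := by gcongr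
  have hs := Finset.sum_le_sum hterm
  have hsplit : ∑ k ∈ Finset.range 39,
      (t₀ ^ (k + 1) / ((k : ℝ) + 2) + ((k : ℝ) + 1) * t₀ ^ k / ((k : ℝ) + 2) * (t - t₀))
      = (∑ k ∈ Finset.range 39, t₀ ^ (k + 1) / ((k : ℝ) + 2))
        + (∑ k ∈ Finset.range 39, ((k : ℝ) + 1) * t₀ ^ k / ((k : ℝ) + 2)) * (t - t₀) := by
    rw [Finset.sum_add_distrib, Finset.sum_mul]
  linarith [hs, hsplit.ge, hsplit.le]

lemma Pp_lb {t : ℝ} (h0 : 0 ≤ t) (h1 : t < 1) : t * Pp t ≤ -Real.log (1 - t) := by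
  have habs : |t| < 1 := by rw [abs_of_nonneg h0]; exact h1
  have hs := Real.hasSum_pow_div_log_of_abs_lt_one habs
  have hsum := sum_le_hasSum (Finset.range 40) (fun i _ => by positivity) hs
  have heq : t * Pp t = ∑ k ∈ Finset.range 40, t ^ (k + 1) / ((k : ℕ) + 1 : ℝ) := by
    rw [Pp, Finset.mul_sum]
    refine Finset.sum_congr rfl fun k _ => by ring
  rw [heq]
  refine le_trans (le_of_eq (Finset.sum_congr rfl fun k _ => ?_)) hsum
  push_cast
  ring

/-- Positivity of the truncated, rescaled fixed-point functional:
`0.4073 * Pp t > t` on `[0,1]`. -/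
lemma Pp_pos {t : ℝ} (h0 : 0 ≤ t) (h1 : t ≤ 1) :
    t < (4073 / 10000 : ℝ) * Pp t := by
  set t₀ : ℝ := 44707 / 62500 with ht₀def
  have ht₀ : (0 : ℝ) ≤ t₀ := by norm_num [ht₀def]
  have htan := Pp_tangent h0 ht₀
  -- numeric endpoint evaluations
  have e0 : (0 : ℝ) < (4073 / 10000) * (Pp t₀ - Dp t₀ * t₀) := by
    rw [Pp, Dp]
    simp only [ht₀def, Finset.sum_range_succ, Finset.sum_range_zero]
    norm_num
  have e1 : (1 : ℝ) < (4073 / 10000) * (Pp t₀ + Dp t₀ * (1 - t₀)) := by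
    rw [Pp, Dp]
    simp only [ht₀def, Finset.sum_range_succ, Finset.sum_range_zero]
    norm_num
  have hlin : (4073 / 10000 : ℝ) * (Pp t₀ + Dp t₀ * (t - t₀)) ≤ (4073 / 10000) * Pp t :=
    mul_le_mul_of_nonneg_left htan (by norm_num)
  rcases le_or_gt ((4073 / 10000 : ℝ) * Dp t₀) 1 with hs | hs
  · have h3 : 0 ≤ (1 - (4073 / 10000 : ℝ) * Dp t₀) * (1 - t) :=
      mul_nonneg (by linarith) (by linarith)
    nlinarith [hlin, e1, h3]
  · have h3 : 0 ≤ ((4073 / 10000 : ℝ) * Dp t₀ - 1) * t :=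
      mul_nonneg (by linarith) h0
    nlinarith [hlin, e0, h3]

/-- The key pointwise inequality. -/
lemma key {η q : ℝ} (hη : (0.4073 : ℝ) ≤ η) (hq0 : 0 < q) (hq1 : q ≤ 1) :
    (1 - Real.exp (-q / η)) ^ 2 < q := by
  have hη0 : (0 : ℝ) < η := lt_of_lt_of_le (by norm_num) hη
  have hnd : -q / η = -(q / η) := neg_div η q
  set t : ℝ := Real.sqrt q with htdef
  have ht0 : 0 < t := Real.sqrt_pos.mpr hq0
  have htq : t ^ 2 = q := Real.sq_sqrt hq0.le
  have ht1 : t ≤ 1 := by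
    rw [show (1 : ℝ) = Real.sqrt 1 by simp [Real.sqrt_one]]
    exact Real.sqrt_le_sqrt hq1
  -- main claim: exp(-q/η) > 1 - t
  have hmain : 1 - t < Real.exp (-q / η) := by
    rcases lt_or_eq_of_le ht1 with hlt | heq
    · -- t < 1
      have hPpos := Pp_pos ht0.le ht1
      have hlb := Pp_lb ht0.le hlt
      have hchain : q / η < -Real.log (1 - t) := by
        have h1 : q / η ≤ q / (4073 / 10000 : ℝ) := by
          apply div_le_div_of_nonneg_left hq0.le (by norm_num)
          exact le_trans (by norm_num) hη
        have h2 : q / (4073 / 10000 : ℝ) < t * Pp t := by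
          rw [div_lt_iff₀ (by norm_num : (0:ℝ) < 4073 / 10000)]
          have h4 : t * t < t * ((4073 / 10000) * Pp t) :=
            mul_lt_mul_of_pos_left hPpos ht0
          nlinarith [h4, htq]
        linarith
      have hlog : Real.log (1 - t) < -q / η := by
        rw [hnd]; linarith
      calc 1 - t = Real.exp (Real.log (1 - t)) := (Real.exp_log (by linarith)).symm
        _ < Real.exp (-q / η) := Real.exp_lt_exp.mpr hlog
    · -- t = 1
      rw [← heq]
      simpa using Real.exp_pos (-q / η)
  have hexple : Real.exp (-q / η) ≤ 1 := by
    rw [show (1 : ℝ) = Real.exp 0 by simp]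
    apply Real.exp_le_exp.mpr
    have : 0 ≤ q / η := div_nonneg hq0.le hη0.le
    rw [hnd]
    linarith
  have hnn : 0 ≤ 1 - Real.exp (-q / η) := by linarith
  have hlt : 1 - Real.exp (-q / η) < t := by linarith
  calc (1 - Real.exp (-q / η)) ^ 2 < t ^ 2 := by
        apply pow_lt_pow_left₀ hlt hnn
        norm_num
    _ = q := htq

end DensityEvolutionAux

/-- density evolution for `C = 3` groups. For `η ≥ 0.4073`, the
map `f(p) = (1 - e^{-p/η})²` satisfies `f(p) < p` on `(0,1]`, hence the
recursion `p₀ = 1`, `p_{i+1} = f(p_i)` is strictly decreasing and converges to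
`0`; in particular for every `ε > 0` some iterate satisfies `p_i ≤ ε`. -/
theorem density_evolution_C3 (η : ℝ) (hη : 0.4073 ≤ η)
    (f : ℝ → ℝ) (hf : ∀ p, f p = (1 - Real.exp (-p/η)) ^ 2)
    (p : ℕ → ℝ) (hp0 : p 0 = 1) (hrec : ∀ i, p (i+1) = f (p i)) :
    (∀ q : ℝ, 0 < q → q ≤ 1 → f q < q) ∧
    StrictAnti p ∧
    Tendsto p atTop (nhds 0) ∧
    (∀ ε : ℝ, 0 < ε → ∃ i, p i ≤ ε) := by
  have hη0 : (0 : ℝ) < η := lt_of_lt_of_le (by norm_num) hη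
  have hkey : ∀ q : ℝ, 0 < q → q ≤ 1 → f q < q := by
    intro q hq0 hq1
    rw [hf]
    exact DensityEvolutionAux.key hη hq0 hq1
  -- positivity of f on positives
  have hfpos : ∀ q : ℝ, 0 < q → 0 < f q := by
    intro q hq
    rw [hf]
    have hnd : -q / η = -(q / η) := neg_div η q
    have h1 : Real.exp (-q / η) < 1 := by
      rw [show (1 : ℝ) = Real.exp 0 by simp]
      apply Real.exp_lt_exp.mpr
      have : 0 < q / η := div_pos hq hη0
      rw [hnd]
      linarith
    have : 0 < 1 - Real.exp (-q / η) := by linarith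
    positivity
  have hbounds : ∀ i, 0 < p i ∧ p i ≤ 1 := by
    intro i
    induction i with
    | zero => rw [hp0]; norm_num
    | succ i ih =>
      rw [hrec]
      exact ⟨hfpos _ ih.1, le_of_lt (lt_of_lt_of_le (hkey _ ih.1 ih.2) ih.2)⟩
  have hdec : ∀ i, p (i + 1) < p i := by
    intro i
    rw [hrec]
    exact hkey _ (hbounds i).1 (hbounds i).2
  have hsa : StrictAnti p := strictAnti_nat_of_succ_lt hdec
  -- convergence
  have hbdd : BddBelow (Set.range p) := by
    refine ⟨0, ?_⟩
    rintro x ⟨i, rfl⟩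
    exact (hbounds i).1.le
  set L : ℝ := ⨅ i, p i with hLdef
  have htend : Tendsto p atTop (nhds L) := tendsto_atTop_ciInf hsa.antitone hbdd
  have hL0 : 0 ≤ L := le_ciInf fun i => (hbounds i).1.le
  have hL1 : L ≤ 1 := le_trans (ciInf_le hbdd 0) (le_of_eq hp0)
  have hfc : Continuous f := by
    have : f = fun x => (1 - Real.exp (-x / η)) ^ 2 := funext hf
    rw [this]
    continuity
  have htend2 : Tendsto (fun i => p (i + 1)) atTop (nhds L) :=
    htend.comp (tendsto_add_atTop_nat 1)
  have htendf : Tendsto (fun i => f (p i)) atTop (nhds (f L)) :=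
    (hfc.tendsto L).comp htend
  have hfl : f L = L := by
    apply tendsto_nhds_unique _ htend2
    exact htendf.congr fun i => (hrec i).symm
  have hLzero : L = 0 := by
    by_contra hne
    have hLpos : 0 < L := lt_of_le_of_ne hL0 (Ne.symm hne)
    exact absurd hfl (ne_of_lt (hkey L hLpos hL1))
  rw [hLzero] at htend
  refine ⟨hkey, hsa, htend, ?_⟩
  intro ε hε
  have hev : ∀ᶠ i in atTop, p i < ε := htend.eventually (gt_mem_nhds hε)
  exact hev.exists.imp fun i hi => hi.le
end

section
/- With C ≥ 3 groups, B = ηK bins per group, and edges assigned uniformly and independently per group, the random bipartite graph is a (ε, 1/2, C)-expander (every subset S of left nodes with |S| ≤ εK has |N_c(S)| > |S|/2 in at least one group c) with probability at least 1 − O(1/K), for some sufficiently small constant ε > 0 depending on η and C. In particular, the failure probability contributed by subsets of size s = εK is at most exp(−K·log(1/(εc²))) for ε < 1/(2c²) with c = e(e/η)^{C/2}, and by constant-size subsets is O(1/K). -/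
/-!
Union bound over the left sets `S`. If expansion fails at `S`, with `|S| = s`, then `2 ≤ s` and in
every group the `s` edges of `S` land in a set of `⌊s/2⌋` bins. For one group this has probability
at most `X_s = (B choose ⌊s/2⌋) (⌊s/2⌋/B)^s ≤ e^⌊s/2⌋ (⌊s/2⌋/B)^⌈s/2⌉`, hence `X_s² ≤ (e s/(2B))^s`.
The groups are independent, so with three of them and `(K choose s) ≤ (eK/s)^s` the sets of size
`s` contribute at most `(K choose s) X_s³`, whose square is at most `(e⁵ s/(8η³K))^s`. Once
`e⁵ ε/(8η³) ≤ 1/16` this is at most `((1/2)^s/(εK))²`, and summing over `s` gives `2/(εK)`.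
-/

open Finset Real

lemma Nat.choose_le_exp_mul_div_pow (n k : ℕ) :
    (n.choose k : ℝ) ≤ (exp 1 * n / k) ^ k := by
  rcases k.eq_zero_or_pos with rfl | hk
  · simp
  have hfac : (k : ℝ) ^ k / k.factorial ≤ exp 1 ^ k := by
    simpa [← exp_nat_mul] using pow_div_factorial_le_exp (x := (k : ℝ)) k.cast_nonneg k
  calc (n.choose k : ℝ) ≤ n ^ k / k.factorial := Nat.choose_le_pow_div k n
    _ = (n / k) ^ k * ((k : ℝ) ^ k / k.factorial) := by
        field_simp
        rw [div_pow, div_mul_cancel₀ _ (by positivity)]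
    _ ≤ (n / k) ^ k * exp 1 ^ k := by gcongr
    _ = (exp 1 * n / k) ^ k := by ring

noncomputable def smallImageBound (B s : ℕ) : ℝ := B.choose (s / 2) * ((s / 2 : ℕ) / B : ℝ) ^ s

lemma smallImageBound_nonneg (B s : ℕ) : 0 ≤ smallImageBound B s := by
  unfold smallImageBound; positivity

lemma card_filter_forall_apply_div_card_fun {ι γ : Type*} [Fintype ι] [DecidableEq ι] [Fintype γ]
    (P : γ → Prop) [DecidablePred P] :
    (#{A : ι → γ | ∀ c, P (A c)} : ℝ) / Fintype.card (ι → γ) =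
      ((#{x | P x} : ℝ) / Fintype.card γ) ^ Fintype.card ι := by
  have : ({A : ι → γ | ∀ c, P (A c)} : Finset _) = Fintype.piFinset fun _ ↦ {x | P x} := by
    ext A; simp
  rw [this, Fintype.card_piFinset, prod_const, Fintype.card_fun, div_pow, card_univ]
  push_cast; rfl

section Counting

variable {ι α β : Type*} [Fintype ι] [DecidableEq ι] [Fintype α] [DecidableEq α] [Fintype β]
  [DecidableEq β]

lemma card_filter_forall_mem (S : Finset α) (T : Finset β) :
    #{f : α → β | ∀ i ∈ S, f i ∈ T} = #T ^ #S * Fintype.card β ^ #Sᶜ := by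
  have : ({f : α → β | ∀ i ∈ S, f i ∈ T} : Finset _) =
      Fintype.piFinset fun i ↦ if i ∈ S then T else univ := by
    ext f
    simp only [mem_filter, mem_univ, true_and, Fintype.mem_piFinset]
    refine ⟨fun h i ↦ ?_, fun h i hi ↦ by simpa [hi] using h i⟩
    split_ifs with hi
    exacts [h i hi, mem_univ _]
  rw [this, Fintype.card_piFinset]
  simp only [apply_ite card, prod_ite, prod_const, card_univ]
  congr 3 <;> ext <;> simp

lemma card_filter_card_image_le (S : Finset α) {t : ℕ} (ht : t ≤ Fintype.card β) :
    #{f : α → β | #(S.image f) ≤ t} ≤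
      (Fintype.card β).choose t * (t ^ #S * Fintype.card β ^ #Sᶜ) := by
  calc #{f : α → β | #(S.image f) ≤ t}
      ≤ #((powersetCard t univ).biUnion fun T ↦ {f : α → β | ∀ i ∈ S, f i ∈ T}) := by
        refine card_le_card fun f hf ↦ ?_
        obtain ⟨T, hfT, -, hT⟩ := exists_subsuperset_card_eq (subset_univ (S.image f))
          (mem_filter.1 hf).2 (by simpa using ht)
        simp only [mem_biUnion, mem_powersetCard, mem_filter, mem_univ, true_and]
        exact ⟨T, ⟨subset_univ T, hT⟩, fun i hi ↦ hfT (mem_image_of_mem f hi)⟩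
    _ ≤ ∑ T ∈ powersetCard t univ, #{f : α → β | ∀ i ∈ S, f i ∈ T} := card_biUnion_le
    _ = (Fintype.card β).choose t * (t ^ #S * Fintype.card β ^ #Sᶜ) := by
        rw [sum_congr rfl fun T hT ↦ by rw [card_filter_forall_mem, (mem_powersetCard.1 hT).2],
          sum_const, card_powersetCard, card_univ, smul_eq_mul]

lemma card_filter_card_image_le_div [Nonempty β] (S : Finset α) {t : ℕ} (ht : t ≤ Fintype.card β) :
    (#{f : α → β | #(S.image f) ≤ t} : ℝ) / Fintype.card (α → β) ≤
      (Fintype.card β).choose t * (t / Fintype.card β : ℝ) ^ #S := by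
  have hβ : (0 : ℝ) < Fintype.card β := by exact_mod_cast Fintype.card_pos
  have hsplit : (Fintype.card (α → β) : ℝ) = (Fintype.card β : ℝ) ^ #S * Fintype.card β ^ #Sᶜ := by
    rw [Fintype.card_fun, ← pow_add, card_add_card_compl]; push_cast; rfl
  rw [hsplit, div_le_iff₀ (by positivity), div_pow]
  calc (#{f : α → β | #(S.image f) ≤ t} : ℝ)
      ≤ (Fintype.card β).choose t * (t ^ #S * Fintype.card β ^ #Sᶜ) := by
        exact_mod_cast card_filter_card_image_le S ht
    _ = _ := by field_simp

lemma card_filter_forall_two_mul_card_image_le_div [Nonempty β] (hι : 3 ≤ Fintype.card ι)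
    (S : Finset α) (hS : #S / 2 ≤ Fintype.card β) :
    (#{A : ι → α → β | ∀ c, 2 * #(S.image (A c)) ≤ #S} : ℝ) / Fintype.card (ι → α → β) ≤
      smallImageBound (Fintype.card β) #S ^ 3 := by
  rw [card_filter_forall_apply_div_card_fun (fun f : α → β ↦ 2 * #(S.image f) ≤ #S)]
  set p : ℝ := (#{f : α → β | 2 * #(S.image f) ≤ #S} : ℝ) / Fintype.card (α → β)
  have hp₀ : 0 ≤ p := by positivity
  have hp₁ : p ≤ 1 := div_le_one_of_le₀ (by exact_mod_cast card_le_univ _) (by positivity)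
  have hpX : p ≤ smallImageBound (Fintype.card β) #S := by
    refine le_trans ?_ (card_filter_card_image_le_div S hS)
    refine div_le_div_of_nonneg_right ?_ (by positivity)
    refine Nat.cast_le.2 (card_le_card (monotone_filter_right _ fun f _ hf ↦ ?_))
    exact (Nat.le_div_iff_mul_le two_pos).2 (by omega)
  calc p ^ Fintype.card ι ≤ p ^ 3 := pow_le_pow_of_le_one hp₀ hp₁ hι
    _ ≤ _ := by gcongr

lemma card_filter_not_expander_le_sum [Nonempty ι] (r : ℝ) :
    #{A : ι → α → β | ¬ ∀ S : Finset α, S.Nonempty → (#S : ℝ) ≤ r →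
        ∃ c, (#S : ℝ) < 2 * #(S.image (A c))} ≤
      ∑ S : Finset α with 2 ≤ #S ∧ (#S : ℝ) ≤ r,
        #{A : ι → α → β | ∀ c, 2 * #(S.image (A c)) ≤ #S} := by
  refine (card_le_card fun A hA ↦ ?_).trans card_biUnion_le
  obtain ⟨S, hS, hSr, hA⟩ : ∃ S : Finset α, S.Nonempty ∧ (#S : ℝ) ≤ r ∧
      ∀ c, 2 * #(S.image (A c)) ≤ #S := by
    simpa [← Nat.cast_le (α := ℝ)] using hA
  have h2S : 2 ≤ #S := by
    have := (hS.image (A (Classical.arbitrary ι))).card_pos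
    have := hA (Classical.arbitrary ι)
    omega
  simp only [mem_biUnion, mem_filter, mem_univ, true_and]
  exact ⟨S, ⟨h2S, hSr⟩, hA⟩

lemma card_filter_not_expander_div_le [Nonempty β] (hι : 3 ≤ Fintype.card ι) {r : ℝ}
    (hr : r ≤ 2 * Fintype.card β) :
    (#{A : ι → α → β | ¬ ∀ S : Finset α, S.Nonempty → (#S : ℝ) ≤ r →
        ∃ c, (#S : ℝ) < 2 * #(S.image (A c))} : ℝ) / Fintype.card (ι → α → β) ≤
      ∑ S : Finset α with 2 ≤ #S ∧ (#S : ℝ) ≤ r, smallImageBound (Fintype.card β) #S ^ 3 := by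
  have : Nonempty ι := Fintype.card_pos_iff.1 (by omega)
  calc _ ≤ ∑ S : Finset α with 2 ≤ #S ∧ (#S : ℝ) ≤ r,
        (#{A : ι → α → β | ∀ c, 2 * #(S.image (A c)) ≤ #S} : ℝ) / Fintype.card (ι → α → β) := by
        rw [← sum_div, ← Nat.cast_sum]
        gcongr
        exact card_filter_not_expander_le_sum r
    _ ≤ _ := by
        refine sum_le_sum fun S hS ↦ card_filter_forall_two_mul_card_image_le_div hι S ?_
        have : (#S : ℝ) ≤ 2 * Fintype.card β := (mem_filter.1 hS).2.2.trans hr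
        exact Nat.div_le_of_le_mul (by exact_mod_cast this)

end Counting

lemma smallImageBound_sq_le {B s : ℕ} (hB : 0 < B) (hs : s ≤ 2 * B) :
    smallImageBound B s ^ 2 ≤ (exp 1 * s / (2 * B)) ^ s := by
  set t := s / 2
  have hBR : (0 : ℝ) < B := by exact_mod_cast hB
  have hts : 2 * t ≤ s := Nat.mul_div_le s 2
  have hcancel : (exp 1 * B / t) ^ t * ((t : ℝ) / B) ^ t = exp 1 ^ t := by
    rcases eq_or_ne t 0 with h | h
    · simp [h]
    · rw [← mul_pow]; congr 1; field_simp
  have hX : smallImageBound B s ≤ exp 1 ^ t * ((t : ℝ) / B) ^ (s - t) := by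
    calc smallImageBound B s ≤ (exp 1 * B / t) ^ t * ((t : ℝ) / B) ^ (t + (s - t)) := by
          rw [Nat.add_sub_cancel' (by omega)]
          exact mul_le_mul_of_nonneg_right (Nat.choose_le_exp_mul_div_pow B t) (by positivity)
      _ = exp 1 ^ t * ((t : ℝ) / B) ^ (s - t) := by rw [pow_add, ← mul_assoc, hcancel]
  have htB : (t : ℝ) / B ≤ s / (2 * B) := by
    rw [div_le_div_iff₀ hBR (by positivity)]
    have : 2 * (t : ℝ) ≤ s := by exact_mod_cast hts
    nlinarith
  have hsB : (s : ℝ) / (2 * B) ≤ 1 := by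
    rw [div_le_one (by positivity)]; exact_mod_cast hs
  calc smallImageBound B s ^ 2 ≤ (exp 1 ^ t * ((t : ℝ) / B) ^ (s - t)) ^ 2 := by
        gcongr; exact smallImageBound_nonneg B s
    _ = exp 1 ^ (2 * t) * ((t : ℝ) / B) ^ (2 * (s - t)) := by ring
    _ ≤ exp 1 ^ s * ((s : ℝ) / (2 * B)) ^ (2 * (s - t)) := by
        gcongr
        exact one_le_exp zero_le_one
    _ ≤ exp 1 ^ s * ((s : ℝ) / (2 * B)) ^ s :=
        mul_le_mul_of_nonneg_left (pow_le_pow_of_le_one (by positivity) hsB (by omega))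
          (by positivity)
    _ = (exp 1 * s / (2 * B)) ^ s := by rw [mul_div_assoc, mul_pow]

lemma div_sixteen_pow_le {u : ℝ} (hu₀ : 0 ≤ u) (hu₁ : u ≤ 1) {s : ℕ} (hs : 2 ≤ s) :
    (u / 16) ^ s ≤ ((1 / 2) ^ s * u / s) ^ 2 := by
  have hsR : (0 : ℝ) < s := by positivity
  have hs4 : (1 / 4 : ℝ) ^ s ≤ 1 / s ^ 2 := by
    rw [one_div_pow, one_div_le_one_div (by positivity) (by positivity)]
    calc (s : ℝ) ^ 2 ≤ ((2 : ℝ) ^ s) ^ 2 := by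
          gcongr; exact_mod_cast Nat.lt_two_pow_self.le
      _ = 4 ^ s := by rw [← pow_mul, mul_comm, pow_mul]; norm_num
  calc (u / 16) ^ s = u ^ s * ((1 / 4) ^ s * (1 / 4) ^ s) := by
        rw [← mul_pow, ← mul_pow]; norm_num [div_eq_mul_inv]
    _ ≤ u ^ 2 * ((1 / 4) ^ s * (1 / s ^ 2)) :=
        mul_le_mul (pow_le_pow_of_le_one hu₀ hu₁ hs) (by gcongr) (by positivity) (by positivity)
    _ = ((1 / 2) ^ s * u / s) ^ 2 := by
        rw [show (1 / 4 : ℝ) ^ s = ((1 / 2) ^ s) ^ 2 by rw [← pow_mul, mul_comm, pow_mul]; norm_num]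
        field_simp

lemma choose_mul_smallImageBound_pow_three_le {η ε : ℝ} (hε : 0 < ε) (hεη : ε ≤ η)
    (hq : exp 1 ^ 5 / (8 * η ^ 3) * ε ≤ 1 / 16) {K B s : ℕ} (hB : (B : ℝ) = η * K)
    (hs : 2 ≤ s) (hsK : (s : ℝ) ≤ ε * K) :
    (K.choose s : ℝ) * smallImageBound B s ^ 3 ≤ (1 / 2) ^ s / (ε * K) := by
  have hsR : (2 : ℝ) ≤ s := by exact_mod_cast hs
  have hK : (0 : ℝ) < K := pos_of_mul_pos_right (by linarith) hε.le
  have hη : 0 < η := hε.trans_le hεη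
  have hBR : (0 : ℝ) < B := by rw [hB]; positivity
  have hs2B : s ≤ 2 * B := by
    have : (s : ℝ) ≤ 2 * B := by rw [hB]; nlinarith
    exact_mod_cast this
  set u : ℝ := s / (ε * K)
  have hu₀ : 0 ≤ u := by positivity
  have hu₁ : u ≤ 1 := div_le_one_of_le₀ hsK (by positivity)
  have hX := smallImageBound_sq_le (by exact_mod_cast hBR) hs2B
  have hX₀ := smallImageBound_nonneg B s
  rw [← pow_le_pow_iff_left₀ (by positivity) (by positivity) two_ne_zero]
  calc ((K.choose s : ℝ) * smallImageBound B s ^ 3) ^ 2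
      = (K.choose s : ℝ) ^ 2 * (smallImageBound B s ^ 2) ^ 3 := by ring
    _ ≤ ((exp 1 * K / s) ^ s) ^ 2 * ((exp 1 * s / (2 * B)) ^ s) ^ 3 := by
        gcongr
        exact Nat.choose_le_exp_mul_div_pow K s
    _ = ((exp 1 * K / s) ^ 2 * (exp 1 * s / (2 * B)) ^ 3) ^ s := by
        rw [← pow_mul', ← pow_mul', pow_mul, pow_mul, mul_pow]
    _ = (exp 1 ^ 5 / (8 * η ^ 3) * ε * u) ^ s := by
        rw [hB]; simp only [u]; field_simp; ring
    _ ≤ (u / 16) ^ s := by gcongr; nlinarith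
    _ ≤ ((1 / 2) ^ s * u / s) ^ 2 := div_sixteen_pow_le hu₀ hu₁ hs
    _ = ((1 / 2) ^ s / (ε * K)) ^ 2 := by
        congr 1; simp only [u]; field_simp

lemma sum_smallImageBound_pow_three_le {α : Type*} [Fintype α] {η ε : ℝ} (hε : 0 < ε)
    (hεη : ε ≤ η) (hq : exp 1 ^ 5 / (8 * η ^ 3) * ε ≤ 1 / 16) {B : ℕ}
    (hB : (B : ℝ) = η * Fintype.card α) :
    ∑ S : Finset α with 2 ≤ #S ∧ (#S : ℝ) ≤ ε * Fintype.card α, smallImageBound B #S ^ 3 ≤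
      2 / ε / Fintype.card α := by
  set K := Fintype.card α
  calc _ = ∑ s ∈ range (K + 1),
          K.choose s * (if 2 ≤ s ∧ (s : ℝ) ≤ ε * K then smallImageBound B s ^ 3 else 0) := by
        rw [sum_filter, ← powerset_univ, sum_powerset_apply_card
          fun s ↦ if 2 ≤ s ∧ (s : ℝ) ≤ ε * K then smallImageBound B s ^ 3 else 0]
        simp [K]
    _ ≤ ∑ s ∈ range (K + 1), (1 / 2) ^ s / (ε * K) := by
        refine sum_le_sum fun s _ ↦ ?_
        split_ifs with hs
        · exact choose_mul_smallImageBound_pow_three_le hε hεη hq hB hs.1 hs.2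
        · simp only [mul_zero]; positivity
    _ ≤ 2 / ε / K := by
        rw [← sum_div, div_div]
        gcongr
        exact sum_geometric_two_le _

/-- with `C ≥ 3` groups of `B = ηK` bins and edges assigned
uniformly and independently per group, the random bipartite graph is an
`(ε, 1/2, C)`-expander (every nonempty left subset `S` with `|S| ≤ εK` has
`|N_c(S)| > |S|/2` in some group `c`) with probability at least `1 - O(1/K)`,
for some sufficiently small constant `ε > 0`. -/
theorem random_graph_is_expander (C : ℕ) (hC : 3 ≤ C) (η : ℝ) (hη : 0 < η) :
    ∃ ε : ℝ, 0 < ε ∧ ∃ c₀ : ℝ, 0 < c₀ ∧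
      ∀ K B : ℕ, 0 < K → (B : ℝ) = η * K →
        ((Finset.univ.filter (fun A : Fin C → Fin K → Fin B =>
            ¬ (∀ S : Finset (Fin K), S.Nonempty → (S.card : ℝ) ≤ ε * K →
                ∃ c : Fin C, (S.card : ℝ) < 2 * (S.image (A c)).card))).card : ℝ)
              / (Fintype.card (Fin C → Fin K → Fin B) : ℝ)
          ≤ c₀ / K := by
  obtain ⟨ε, hε, hεη, hq⟩ : ∃ ε : ℝ, 0 < ε ∧ ε ≤ η ∧ exp 1 ^ 5 / (8 * η ^ 3) * ε ≤ 1 / 16 := by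
    have hq₀ : 0 < exp 1 ^ 5 / (8 * η ^ 3) := by positivity
    exact ⟨min η (1 / 16 / _), lt_min hη (by positivity), min_le_left _ _,
      (le_div_iff₀' hq₀).1 (min_le_right _ _)⟩
  refine ⟨ε, hε, 2 / ε, by positivity, fun K B _ hB ↦ ?_⟩
  have : NeZero B := ⟨fun h ↦ by
    have : (0 : ℝ) < η * K := by positivity
    simp [← hB, h] at this⟩
  calc _ ≤ ∑ S : Finset (Fin K) with 2 ≤ #S ∧ (#S : ℝ) ≤ ε * K, smallImageBound B #S ^ 3 := by
        have h := card_filter_not_expander_div_le (ι := Fin C) (α := Fin K) (β := Fin B)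
          (by simpa) (r := ε * K) (by simp only [Fintype.card_fin, hB]; nlinarith)
        simp only [Fintype.card_fin] at h
        refine le_of_eq_of_le ?_ h
        -- the two filters differ in the `Decidable` instance of `∃ c : Fin C`
        congr! 4
    _ ≤ 2 / ε / K := by
        simpa using sum_smallImageBound_pow_three_le (α := Fin K) hε hεη hq (by simpa using hB)
end
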